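/- Let π ∈ S, τ^π = τ_{F^π}, s ≥ 1, and let 𝐧 ∈ ℕ₀^d satisfy 𝐧 < 2^{2m_s+1}𝟏, 𝐧 ∉ B_{2m_s}, and 𝐧 ∉ {0,…,2^{m_s}−1}^d. Then (τ^π)̂_𝐧(Δ^{(m_s)}_𝐥) = 0 for every 𝐥 ∈ {0,…,2^{m_s}−1}^d. In particular this holds for τ = τ_F (identity permutations). -/

import Mathlib

open Filter Finset Topology MeasureTheory
open scoped Classical

noncomputable section

instance : TopologicalSpace (ZMod 2) := ⊥
instance : DiscreteTopology (ZMod 2) := ⟨rfl⟩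

/-- The dyadic (Cantor) group `𝔾`: sequences of elements of `ℤ/2ℤ`
with coordinatewise addition modulo 2, Tychonoff topology. -/
abbrev DyadicGroup : Type := ℕ → ZMod 2

instance : MeasurableSpace DyadicGroup := borel _
instance : BorelSpace DyadicGroup := ⟨rfl⟩

/-- `𝔾^d`. -/
abbrev GD (d : ℕ) : Type := Fin d → DyadicGroup

/-- One-dimensional Walsh function `W_n` in the Paley enumeration:
`W_n(g) = ∏_k (-1)^(g_k n_k)`. -/
def walsh (n : ℕ) (g : DyadicGroup) : ℝ :=
  ∏ k ∈ Finset.range n, if n.testBit k ∧ g k = 1 then (-1 : ℝ) else 1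

/-- `d`-dimensional Walsh function `W_𝐧(𝐠) = ∏ W_{n^l}(g^l)`. -/
def walshD {d : ℕ} (n : Fin d → ℕ) (g : GD d) : ℝ :=
  ∏ l, walsh (n l) (g l)

/-- The dyadic interval `Δ^{(k)}_m` of rank `k`. -/
def dyadicInterval (k m : ℕ) : Set DyadicGroup :=
  {g | ∀ t < k, g t = if m.testBit (k - 1 - t) then 1 else 0}

/-- The dyadic cube `Δ^{(k)}_𝐦 = Δ^{(k)}_{m^1} × ⋯ × Δ^{(k)}_{m^d}`. -/
def dyadicCube {d : ℕ} (k : ℕ) (m : Fin d → ℕ) : Set (GD d) :=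
  {g | ∀ l, g l ∈ dyadicInterval k (m l)}

/-- The canonical point of `Δ^{(k)}_m`. -/
def intervalPoint (k m : ℕ) : DyadicGroup :=
  fun t => if t < k ∧ m.testBit (k - 1 - t) then 1 else 0

/-- The canonical point of `Δ^{(k)}_𝐦`. -/
def cubePoint {d : ℕ} (k : ℕ) (m : Fin d → ℕ) : GD d :=
  fun l => intervalPoint k (m l)

/-- `W^{(k)}_{n,m}`: the (constant, for `n < 2^k`) value of `W_n` on `Δ^{(k)}_m`. -/
def walshVal (k n m : ℕ) : ℝ := walsh n (intervalPoint k m)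

/-- `W^{(k)}_{𝐧𝐦}`: the (constant, for `𝐧 < 2^k·𝟏`) value of `W_𝐧` on `Δ^{(k)}_𝐦`. -/
def walshValD {d : ℕ} (k : ℕ) (n m : Fin d → ℕ) : ℝ := walshD n (cubePoint k m)

/-- The box `{𝐧 : 𝐧 < 𝐍}` as a finset. -/
def boxLt {d : ℕ} (N : Fin d → ℕ) : Finset (Fin d → ℕ) :=
  Fintype.piFinset fun l => Finset.range (N l)

/-- The box `{0,…,2^k−1}^d` as a set. -/
def box (d k : ℕ) : Set (Fin d → ℕ) := {m | ∀ l, m l < 2 ^ k}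

/-- The rectangular partial sum `S_𝐍(𝐠)` of the Walsh series with coefficients `a`. -/
def walshPartialSum {d : ℕ} (a : (Fin d → ℕ) → ℂ) (N : Fin d → ℕ) (g : GD d) : ℂ :=
  ∑ n ∈ boxLt N, a n * (walshD n g : ℂ)

/-- Convergence over rectangles: `S_𝐍(𝐠) → S` as `min_j N^j → ∞`. -/
def ConvergesOverRectangles {d : ℕ} (a : (Fin d → ℕ) → ℂ) (g : GD d) (S : ℂ) : Prop :=
  Tendsto (fun N : Fin d → ℕ => walshPartialSum a N g) atTop (𝓝 S)

/-- Convergence over cubes: `S_{N𝟏}(𝐠) → S` as `N → ∞`. -/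
def ConvergesOverCubes {d : ℕ} (a : (Fin d → ℕ) → ℂ) (g : GD d) (S : ℂ) : Prop :=
  Tendsto (fun N : ℕ => walshPartialSum a (fun _ => N) g) atTop (𝓝 S)

/-- `λ`-convergence: `S_𝐍(𝐠) → S` as `min_j N^j → ∞` along `𝐍` with `max N^j/N^k ≤ λ`. -/
def LambdaConverges {d : ℕ} (lam : ℝ) (a : (Fin d → ℕ) → ℂ) (g : GD d) (S : ℂ) : Prop :=
  ∀ ε : ℝ, 0 < ε → ∃ K : ℕ, ∀ N : Fin d → ℕ, (∀ j, K ≤ N j) →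
    (∀ j k, (N j : ℝ) ≤ lam * N k) → ‖walshPartialSum a N g - S‖ < ε

/-- Auxiliary predicate for iterated summation of a multiple series with terms `f`;
the list gives the order of summation, *innermost index first*.  After summing the
series in the variables of the list, the remaining (partially summed) function is `g`. -/
def IterConvAux {d : ℕ} : List (Fin d) → ((Fin d → ℕ) → ℂ) → ((Fin d → ℕ) → ℂ) → Prop
  | [], f, g => f = g
  | j :: rest, f, g => ∃ h : (Fin d → ℕ) → ℂ,
      (∀ n, Tendsto (fun T : ℕ => ∑ t ∈ Finset.range T, f (Function.update n j t))
        atTop (𝓝 (h n))) ∧ IterConvAux rest h g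

/-- The multiple series with terms `f` converges iteratedly to `S`, the order of
summation being given by the list `l` (innermost index first): all successively
nested inner series converge and the full iterated sum equals `S`. -/
def IterConverges {d : ℕ} (l : List (Fin d)) (f : (Fin d → ℕ) → ℂ) (S : ℂ) : Prop :=
  ∃ g, IterConvAux l f g ∧ ∀ n, g n = S

/-- `A` is an M-set for the `d`-dimensional Walsh system under rectangular convergence. -/
def IsMSetRect {d : ℕ} (A : Set (GD d)) : Prop :=
  ∃ a : (Fin d → ℕ) → ℂ, (∃ n, a n ≠ 0) ∧ ∀ g ∉ A, ConvergesOverRectangles a g 0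

/-- `A` is an M-set for the `d`-dimensional Walsh system under convergence over cubes. -/
def IsMSetCubes {d : ℕ} (A : Set (GD d)) : Prop :=
  ∃ a : (Fin d → ℕ) → ℂ, (∃ n, a n ≠ 0) ∧ ∀ g ∉ A, ConvergesOverCubes a g 0

/-- `A` is an M-set under iterated convergence with summation order `l` (innermost first). -/
def IsMSetIter {d : ℕ} (A : Set (GD d)) (l : List (Fin d)) : Prop :=
  ∃ a : (Fin d → ℕ) → ℂ, (∃ n, a n ≠ 0) ∧
    ∀ g ∉ A, IterConverges l (fun n => a n * (walshD n g : ℂ)) 0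

/-- `A` is an M-set for the `d`-dimensional Walsh system under `λ`-convergence. -/
def IsMSetLambda {d : ℕ} (lam : ℝ) (A : Set (GD d)) : Prop :=
  ∃ a : (Fin d → ℕ) → ℂ, (∃ n, a n ≠ 0) ∧ ∀ g ∉ A, LambdaConverges lam a g 0

/-- A quasimeasure: a finitely additive function on dyadic cubes (indexed by rank
`k` and position `𝐦 < 2^k·𝟏`). -/
def IsQuasimeasure {d : ℕ} (τ : ℕ → (Fin d → ℕ) → ℂ) : Prop :=
  ∀ k m, (∀ l, m l < 2 ^ k) →
    τ k m = ∑ σ : Fin d → Fin 2, τ (k + 1) fun l => 2 * m l + (σ l : ℕ)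

/-- The quasimeasure generated by the Walsh series with coefficients `a`:
`τ(Δ^{(k)}_𝐦) = 2^{-kd} ∑_{𝐧<2^k𝟏} a_𝐧 W_𝐧(Δ^{(k)}_𝐦)`. -/
def genQM {d : ℕ} (a : (Fin d → ℕ) → ℂ) (k : ℕ) (m : Fin d → ℕ) : ℂ :=
  ((2 : ℂ) ^ (k * d))⁻¹ * ∑ n ∈ boxLt (fun _ : Fin d => 2 ^ k), a n * (walshValD k n m : ℂ)

/-- The Fourier–Walsh coefficient `τ̂_𝐧` of a quasimeasure `τ`, computed at resolution `k`
(the value does not depend on `k` as long as `𝐧 < 2^k𝟏`). -/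
def fourierCoeffAt {d : ℕ} (τ : ℕ → (Fin d → ℕ) → ℂ) (n : Fin d → ℕ) (k : ℕ) : ℂ :=
  ∑ m ∈ boxLt (fun _ : Fin d => 2 ^ k), (walshValD k n m : ℂ) * τ k m

/-- The local Fourier–Walsh coefficient `τ̂_𝐧(Δ^{(r)}_{𝐦Δ})`, computed at resolution `k ≥ r`. -/
def localCoeffAt {d : ℕ} (τ : ℕ → (Fin d → ℕ) → ℂ) (n : Fin d → ℕ)
    (r : ℕ) (mΔ : Fin d → ℕ) (k : ℕ) : ℂ :=
  ∑ m ∈ (boxLt (fun _ : Fin d => 2 ^ k)).filter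
      (fun m => dyadicCube k m ⊆ dyadicCube r mΔ),
    (walshValD k n m : ℂ) * τ k m

/-- The support of a quasimeasure: the complement of the union of all dyadic cubes `Δ₀`
such that `τ(Δ) = 0` for every dyadic cube `Δ ⊆ Δ₀`. -/
def qmSupport {d : ℕ} (τ : ℕ → (Fin d → ℕ) → ℂ) : Set (GD d) :=
  (⋃ k, ⋃ m ∈ box d k,
    ⋃ (_ : ∀ k' m', (∀ l, m' l < 2 ^ k') →
        dyadicCube k' m' ⊆ dyadicCube k m → τ k' m' = 0),
    dyadicCube k m)ᶜ

/-- The restriction `τ|_{Δ̃}` of a quasimeasure to the dyadic cube `Δ̃ = Δ^{(r)}_{𝐦Δ}`: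
`τ|_{Δ̃}(Δ) = τ(Δ̃ ∩ Δ)` (two dyadic cubes are nested or disjoint). -/
def restrictQM {d : ℕ} (τ : ℕ → (Fin d → ℕ) → ℂ) (r : ℕ) (mΔ : Fin d → ℕ) :
    ℕ → (Fin d → ℕ) → ℂ := fun k m =>
  if dyadicCube k m ⊆ dyadicCube (d := d) r mΔ then τ k m
  else if dyadicCube (d := d) r mΔ ⊆ dyadicCube k m then τ r mΔ
  else 0

/-- `τ` is the canonical quasimeasure `τ_E` associated with a (nonempty closed) set `E`:
`τ(𝔾^d) = 1`; `τ(Δ) = 0` iff `Δ ∩ E = ∅`; and the mass of a cube meeting `E` is divided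
equally among its `2^d` immediate subcubes that meet `E`. -/
def IsTauOf {d : ℕ} (E : Set (GD d)) (τ : ℕ → (Fin d → ℕ) → ℂ) : Prop :=
  IsQuasimeasure τ ∧
  τ 0 (fun _ => 0) = 1 ∧
  (∀ k m, (∀ l, m l < 2 ^ k) → (τ k m = 0 ↔ dyadicCube k m ∩ E = ∅)) ∧
  (∀ k m, (∀ l, m l < 2 ^ k) → (dyadicCube k m ∩ E).Nonempty →
    ∀ σ : Fin d → Fin 2,
      τ (k + 1) (fun l => 2 * m l + (σ l : ℕ)) =
        if (dyadicCube (k + 1) (fun l => 2 * m l + (σ l : ℕ)) ∩ E).Nonempty then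
          τ k m / ((Finset.univ.filter fun σ' : Fin d → Fin 2 =>
              (dyadicCube (k + 1) (fun l => 2 * m l + (σ' l : ℕ)) ∩ E).Nonempty).card : ℂ)
        else 0)

/-- The sequence `m_s`: `m_1 = 0`, `m_{s+1} = 2(2m_s+1)` (value at `0` is junk). -/
def mSeq : ℕ → ℕ
  | 0 => 0
  | s + 1 => if s = 0 then 0 else 2 * (2 * mSeq s + 1)

/-- The layer `F_s^π`. -/
def Fspi {d : ℕ} (π : ℕ → (Fin d → ℕ) → Fin d → ℕ) (s : ℕ) : Set (GD d) :=
  ⋃ m ∈ box d (mSeq s), ⋃ m' ∈ box d (mSeq s),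
    {g | g ∈ dyadicCube (2 * mSeq s) (fun l => 2 ^ mSeq s * m l + m' l) ∧
      walshD (fun _ => 2 ^ (2 * mSeq s)) g = walshValD (mSeq s) (π s m) m'}

/-- `F̃_s^π = F_1^π ∩ ⋯ ∩ F_s^π` (so `F̃_0^π = 𝔾^d`). -/
def Ftil {d : ℕ} (π : ℕ → (Fin d → ℕ) → Fin d → ℕ) (s : ℕ) : Set (GD d) :=
  ⋂ k ∈ Finset.Icc 1 s, Fspi π k

/-- `F^π = ⋂_{s≥1} F_s^π`. -/
def Fpi {d : ℕ} (π : ℕ → (Fin d → ℕ) → Fin d → ℕ) : Set (GD d) :=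
  ⋂ s ∈ Set.Ici 1, Fspi π s

/-- The identity element of `S` (yielding `F_s`, `F̃_s` and `F` themselves). -/
def idPerm (d : ℕ) : ℕ → (Fin d → ℕ) → Fin d → ℕ := fun _ m => m

/-- `S`: sequences `π = (π_s)` of permutations of the boxes `{0,…,2^{m_s}−1}^d`. -/
structure PermSeq (d : ℕ) where
  p : ℕ → Equiv.Perm (Fin d → ℕ)
  maps : ∀ s, Set.MapsTo (p s) (box d (mSeq s)) (box d (mSeq s))

/-- The underlying sequence of functions of an element of `S`. -/
def PermSeq.f {d : ℕ} (π : PermSeq d) : ℕ → (Fin d → ℕ) → Fin d → ℕ := fun s => ⇑(π.p s)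

/-- `π ∈ S'`: every `π_s` acts coordinatewise, `π_s(𝐦) = (π_s^1(m^1),…,π_s^d(m^d))`. -/
def PermSeq.Coordinatewise {d : ℕ} (π : PermSeq d) : Prop :=
  ∀ s, ∃ e : Fin d → ℕ → ℕ, ∀ m : Fin d → ℕ, π.p s m = fun l => e l (m l)

/-- The Dirichlet kernel `D_N = ∑_{n<N} W_n` of the one-dimensional Walsh system. -/
def dirichlet (N : ℕ) (g : DyadicGroup) : ℝ :=
  ∑ n ∈ Finset.range N, walsh n g

/-! Some coordinate `n^{l₀}` has a bit `t₀ ≥ m_s`, and some coordinate `n^{l_c}` is below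
`2^{2m_s}`. Each layer `F_{s'}^π` prescribes the parity of the bits `2m_{s'}` of the `d`
coordinates as a function of the lower bits. Flipping bit `t₀` of `g^{l₀}` and then, for
`s' = s, s + 1, …` in turn, flipping bit `2m_{s'}` of `g^{l_c}` whenever the status of that
parity condition has changed, defines an involution `φ` of `𝔾^d` that preserves `F^π`, fixes the
bits below `m_s`, and reverses the sign of `W_𝐧`, since `n^{l_c}` does not see the corrected bits.
Bit `t` of `φ g` depends only on the bits `≤ t` of `g`, so `φ` permutes the dyadic cubes of each
rank and, by induction on the rank, leaves `τ_{F^π}` invariant. The terms of the local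
coefficient therefore cancel in pairs. -/

lemma ZMod.two_cases (x : ZMod 2) : x = 0 ∨ x = 1 := by revert x; decide

lemma Nat.testBit_eq_false_of_lt_two_pow {x k i : ℕ} (hx : x < 2 ^ k) (hi : k ≤ i) :
    x.testBit i = false :=
  Nat.testBit_lt_two_pow (lt_of_lt_of_le hx (Nat.pow_le_pow_right two_pos hi))

lemma Nat.exists_testBit_of_two_pow_le {x k : ℕ} (h : 2 ^ k ≤ x) :
    ∃ t, k ≤ t ∧ x.testBit t := by
  by_contra! hx
  exact (Nat.lt_pow_two_of_testBit x fun i hi => by simpa using hx i hi).not_ge h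

def signChar : AddChar (ZMod 2) ℝ where
  toFun x := if x = 1 then -1 else 1
  map_zero_eq_one' := by simp
  map_add_eq_mul' := by
    intro a b
    have h : (1 : ZMod 2) + 1 = 0 := by decide
    rcases ZMod.two_cases a with rfl | rfl <;> rcases ZMod.two_cases b with rfl | rfl <;> simp [h]

lemma signChar_apply (x : ZMod 2) : signChar x = if x = 1 then -1 else 1 := rfl

lemma signChar_injective : Function.Injective signChar := by
  intro x y h
  rcases ZMod.two_cases x with rfl | rfl <;> rcases ZMod.two_cases y with rfl | rfl <;>
    first | rfl | norm_num [signChar_apply] at h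

lemma signChar_sum {ι : Type*} (s : Finset ι) (x : ι → ZMod 2) :
    signChar (∑ i ∈ s, x i) = ∏ i ∈ s, signChar (x i) := by
  induction s using Finset.cons_induction with
  | empty => simp
  | cons a s ha ih => rw [sum_cons, prod_cons, AddChar.map_add_eq_mul, ih]

lemma walsh_eq_prod (n : ℕ) (g : DyadicGroup) :
    walsh n g = ∏ k ∈ range n, if n.testBit k then signChar (g k) else 1 := by
  refine prod_congr rfl fun k _ => ?_
  cases n.testBit k <;> simp [signChar_apply]

lemma walsh_add (n : ℕ) (g h : DyadicGroup) : walsh n (g + h) = walsh n g * walsh n h := by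
  simp only [walsh_eq_prod, Pi.add_apply, AddChar.map_add_eq_mul, ← prod_mul_distrib]
  refine prod_congr rfl fun k _ => ?_
  split_ifs <;> simp

lemma walsh_congr {n : ℕ} {g g' : DyadicGroup} (h : ∀ t, n.testBit t → g t = g' t) :
    walsh n g = walsh n g' := by
  simp only [walsh_eq_prod]
  refine prod_congr rfl fun k _ => ?_
  split_ifs with hk
  · rw [h k hk]
  · rfl

lemma walsh_single (n t : ℕ) :
    walsh n (Pi.single t 1) = if n.testBit t then -1 else 1 := by
  rw [walsh_eq_prod, prod_congr rfl (g := fun k => if k = t then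
    (if n.testBit t then (-1 : ℝ) else 1) else 1), prod_ite_eq']
  · by_cases hb : n.testBit t
    · simp [hb, lt_of_lt_of_le Nat.lt_two_pow_self (Nat.ge_two_pow_of_testBit hb)]
    · simp [hb]
  · intro k _
    by_cases hk : k = t
    · subst hk; by_cases hb : n.testBit k <;> simp [hb, signChar_apply]
    · simp [hk]

lemma walsh_two_pow (j : ℕ) (g : DyadicGroup) : walsh (2 ^ j) g = signChar (g j) := by
  rw [walsh_eq_prod, prod_congr rfl (g := fun k => if k = j then signChar (g j) else 1),
    prod_ite_eq', if_pos (mem_range.2 Nat.lt_two_pow_self)]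
  intro k _
  by_cases hk : k = j
  · simp [hk]
  · simp [Ne.symm hk, hk]

lemma walshD_add {d : ℕ} (n : Fin d → ℕ) (g h : GD d) :
    walshD n (g + h) = walshD n g * walshD n h := by
  simp only [walshD, Pi.add_apply, walsh_add, prod_mul_distrib]

lemma walshD_congr {d : ℕ} {n : Fin d → ℕ} {g g' : GD d}
    (h : ∀ l t, (n l).testBit t → g l t = g' l t) : walshD n g = walshD n g' :=
  prod_congr rfl fun l _ => walsh_congr (h l)

lemma walshD_single {d : ℕ} (n : Fin d → ℕ) (l₀ : Fin d) (t₀ : ℕ) :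
    walshD n (Pi.single l₀ (Pi.single t₀ 1)) = if (n l₀).testBit t₀ then -1 else 1 := by
  rw [walshD, prod_eq_single l₀, Pi.single_eq_same, walsh_single]
  · intro l _ hl
    rw [Pi.single_eq_of_ne hl]
    simp [walsh]
  · simp

lemma walshD_const_two_pow {d : ℕ} (j : ℕ) (g : GD d) :
    walshD (fun _ => 2 ^ j) g = signChar (∑ l, g l j) := by
  simp only [walshD, walsh_two_pow, signChar_sum]

lemma walshD_eq_one_or_neg_one {d : ℕ} (n : Fin d → ℕ) (g : GD d) :
    walshD n g = 1 ∨ walshD n g = -1 := by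
  simp only [walshD, walsh_eq_prod]
  refine prod_induction _ (fun x : ℝ => x = 1 ∨ x = -1) ?_ (Or.inl rfl) fun l _ => ?_
  · rintro a b (rfl | rfl) (rfl | rfl) <;> norm_num
  refine prod_induction _ (fun x : ℝ => x = 1 ∨ x = -1) ?_ (Or.inl rfl) fun k _ => ?_
  · rintro a b (rfl | rfl) (rfl | rfl) <;> norm_num
  split_ifs
  · simp only [signChar_apply]; split_ifs <;> simp
  · simp

section Cubes

variable {d : ℕ}

def AgreeBelow (K : ℕ) (g g' : GD d) : Prop := ∀ l, ∀ t < K, g l t = g' l t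

lemma AgreeBelow.symm {K : ℕ} {g g' : GD d} (h : AgreeBelow K g g') : AgreeBelow K g' g :=
  fun l t ht => (h l t ht).symm

lemma AgreeBelow.mono {K K' : ℕ} {g g' : GD d} (h : AgreeBelow K g g') (hK : K' ≤ K) :
    AgreeBelow K' g g' :=
  fun l t ht => h l t (lt_of_lt_of_le ht hK)

lemma agreeBelow_single_zero {l₀ : Fin d} {t₀ R : ℕ} {c : ZMod 2} (hR : R ≤ t₀) :
    AgreeBelow R (Pi.single l₀ (Pi.single t₀ c)) 0 := by
  intro l t ht
  by_cases hl : l = l₀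
  · subst hl; simp [(ht.trans_le hR).ne]
  · simp [Pi.single_eq_of_ne hl]

lemma walshD_eq_of_agreeBelow {n : Fin d → ℕ} {K : ℕ} (hn : ∀ l, n l < 2 ^ K) {g g' : GD d}
    (h : AgreeBelow K g g') : walshD n g = walshD n g' := by
  refine walshD_congr fun l t ht => h l t ?_
  by_contra hK
  rw [Nat.testBit_eq_false_of_lt_two_pow (hn l) (not_lt.1 hK)] at ht
  exact Bool.false_ne_true ht

def intervalIndex : ℕ → DyadicGroup → ℕ
  | 0, _ => 0
  | k + 1, g => 2 * intervalIndex k g + (g k).val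

lemma intervalIndex_lt (k : ℕ) (g : DyadicGroup) : intervalIndex k g < 2 ^ k := by
  induction k with
  | zero => simp [intervalIndex]
  | succ k ih =>
    have := ZMod.val_lt (g k)
    rw [intervalIndex, pow_succ]; omega

lemma intervalIndex_congr {k : ℕ} {g g' : DyadicGroup} (h : ∀ t < k, g t = g' t) :
    intervalIndex k g = intervalIndex k g' := by
  induction k with
  | zero => rfl
  | succ k ih => rw [intervalIndex, intervalIndex, ih fun t ht => h t (by omega), h k (by omega)]

lemma mem_dyadicInterval_intervalIndex (k : ℕ) (g : DyadicGroup) :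
    g ∈ dyadicInterval k (intervalIndex k g) := by
  induction k with
  | zero => intro t ht; omega
  | succ k ih =>
    intro t ht
    have hv := ZMod.val_lt (g k)
    rcases Nat.lt_succ_iff_lt_or_eq.1 ht with ht | rfl
    · rw [ih t ht, show k + 1 - 1 - t = k - 1 - t + 1 by omega, Nat.testBit_add_one,
        intervalIndex, show (2 * intervalIndex k g + (g k).val) / 2 = intervalIndex k g by omega]
    · rw [intervalIndex, show t + 1 - 1 - t = 0 by omega, Nat.testBit_zero]
      rcases ZMod.two_cases (g t) with h | h <;>
        simp [h, show (1 : ZMod 2).val = 1 from rfl, Nat.add_mod]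

lemma eq_of_mem_dyadicInterval {k a b : ℕ} {g : DyadicGroup} (ha : g ∈ dyadicInterval k a)
    (hb : g ∈ dyadicInterval k b) (ha' : a < 2 ^ k) (hb' : b < 2 ^ k) : a = b := by
  refine Nat.eq_of_testBit_eq fun i => ?_
  by_cases hi : i < k
  · have h := (ha (k - 1 - i) (by omega)).symm.trans (hb (k - 1 - i) (by omega))
    rw [show k - 1 - (k - 1 - i) = i by omega] at h
    revert h
    cases a.testBit i <;> cases b.testBit i <;> decide
  · rw [Nat.testBit_eq_false_of_lt_two_pow ha' (not_lt.1 hi),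
      Nat.testBit_eq_false_of_lt_two_pow hb' (not_lt.1 hi)]

lemma dyadicInterval_succ_subset (k m : ℕ) :
    dyadicInterval (k + 1) m ⊆ dyadicInterval k (m / 2) := by
  intro g hg t ht
  rw [hg t (by omega), Nat.testBit_div_two, show k - 1 - t + 1 = k + 1 - 1 - t by omega]

lemma mem_dyadicInterval_two_pow_mul_add {k₁ k₂ a b : ℕ} (hb : b < 2 ^ k₂) (g : DyadicGroup) :
    g ∈ dyadicInterval (k₁ + k₂) (2 ^ k₂ * a + b) ↔
      g ∈ dyadicInterval k₁ a ∧ (fun t => g (k₁ + t)) ∈ dyadicInterval k₂ b := by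
  simp only [dyadicInterval, Set.mem_ofPred_eq, Nat.testBit_two_pow_mul_add a hb]
  constructor
  · intro h
    refine ⟨fun t ht => ?_, fun u hu => ?_⟩
    · have := h t (by omega)
      rwa [if_neg (show ¬k₁ + k₂ - 1 - t < k₂ by omega),
        show k₁ + k₂ - 1 - t - k₂ = k₁ - 1 - t by omega] at this
    · have := h (k₁ + u) (by omega)
      rwa [if_pos (show k₁ + k₂ - 1 - (k₁ + u) < k₂ by omega),
        show k₁ + k₂ - 1 - (k₁ + u) = k₂ - 1 - u by omega] at this
  · rintro ⟨h₁, h₂⟩ t ht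
    by_cases htk : t < k₁
    · rw [h₁ t htk, if_neg (show ¬k₁ + k₂ - 1 - t < k₂ by omega),
        show k₁ + k₂ - 1 - t - k₂ = k₁ - 1 - t by omega]
    · have := h₂ (t - k₁) (by omega)
      rw [show k₁ + (t - k₁) = t by omega] at this
      rw [this, if_pos (show k₁ + k₂ - 1 - t < k₂ by omega),
        show k₁ + k₂ - 1 - t = k₂ - 1 - (t - k₁) by omega]

def cubeIndex (k : ℕ) (g : GD d) : Fin d → ℕ := fun l => intervalIndex k (g l)

lemma cubeIndex_lt (k : ℕ) (g : GD d) (l : Fin d) : cubeIndex k g l < 2 ^ k :=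
  intervalIndex_lt k (g l)

lemma mem_dyadicCube_cubeIndex (k : ℕ) (g : GD d) : g ∈ dyadicCube k (cubeIndex k g) :=
  fun l => mem_dyadicInterval_intervalIndex k (g l)

lemma eq_of_mem_dyadicCube {k : ℕ} {m m' : Fin d → ℕ} {g : GD d} (hm : g ∈ dyadicCube k m)
    (hm' : g ∈ dyadicCube k m') (hmk : ∀ l, m l < 2 ^ k) (hmk' : ∀ l, m' l < 2 ^ k) : m = m' :=
  funext fun l => eq_of_mem_dyadicInterval (hm l) (hm' l) (hmk l) (hmk' l)

lemma cubeIndex_eq_iff {k : ℕ} {m : Fin d → ℕ} (hm : ∀ l, m l < 2 ^ k) {g : GD d} :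
    cubeIndex k g = m ↔ g ∈ dyadicCube k m :=
  ⟨fun h => h ▸ mem_dyadicCube_cubeIndex k g,
    fun h => eq_of_mem_dyadicCube (mem_dyadicCube_cubeIndex k g) h (cubeIndex_lt k g) hm⟩

lemma cubeIndex_congr {k : ℕ} {g g' : GD d} (h : AgreeBelow k g g') :
    cubeIndex k g = cubeIndex k g' :=
  funext fun l => intervalIndex_congr (h l)

lemma cubePoint_mem_dyadicCube (k : ℕ) (m : Fin d → ℕ) : cubePoint k m ∈ dyadicCube k m := by
  intro l t ht
  simp [cubePoint, intervalPoint, ht]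

lemma agreeBelow_of_mem_dyadicCube {k : ℕ} {m : Fin d → ℕ} {g g' : GD d}
    (hg : g ∈ dyadicCube k m) (hg' : g' ∈ dyadicCube k m) : AgreeBelow k g g' :=
  fun l t ht => (hg l t ht).trans (hg' l t ht).symm

lemma AgreeBelow.mem_dyadicCube {k : ℕ} {m : Fin d → ℕ} {g g' : GD d} (h : AgreeBelow k g g')
    (hg : g ∈ dyadicCube k m) : g' ∈ dyadicCube k m :=
  fun l t ht => (h l t ht).symm.trans (hg l t ht)

lemma dyadicCube_succ_subset (k : ℕ) (m : Fin d → ℕ) :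
    dyadicCube (k + 1) m ⊆ dyadicCube k (fun l => m l / 2) :=
  fun _ hg l => dyadicInterval_succ_subset k (m l) (hg l)

lemma dyadicCube_subset_of_mem {r k : ℕ} (hrk : r ≤ k) {m q : Fin d → ℕ} {g : GD d}
    (hm : g ∈ dyadicCube k m) (hq : g ∈ dyadicCube r q) : dyadicCube k m ⊆ dyadicCube r q :=
  fun _ hg' => ((agreeBelow_of_mem_dyadicCube hm hg').mono hrk).mem_dyadicCube hq

lemma walshD_eq_walshValD {n : Fin d → ℕ} {k : ℕ} (hn : ∀ l, n l < 2 ^ k) {m : Fin d → ℕ}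
    {g : GD d} (hg : g ∈ dyadicCube k m) : walshD n g = walshValD k n m :=
  walshD_eq_of_agreeBelow hn (agreeBelow_of_mem_dyadicCube hg (cubePoint_mem_dyadicCube k m))

end Cubes

section CanonicalQuasimeasure

variable {d : ℕ} {E : Set (GD d)} {τ : ℕ → (Fin d → ℕ) → ℂ}

lemma mem_boxLt_iff {N m : Fin d → ℕ} : m ∈ boxLt N ↔ ∀ l, m l < N l := by
  simp [boxLt]

def meetingChildren (E : Set (GD d)) (k : ℕ) (p : Fin d → ℕ) : Finset (Fin d → ℕ) :=
  (boxLt fun _ => 2 ^ (k + 1)).filter fun m =>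
    (fun l => m l / 2) = p ∧ (dyadicCube (k + 1) m ∩ E).Nonempty

lemma card_filter_children_eq (E : Set (GD d)) {k : ℕ} {p : Fin d → ℕ}
    (hp : ∀ l, p l < 2 ^ k) :
    (univ.filter fun σ : Fin d → Fin 2 =>
      (dyadicCube (k + 1) (fun l => 2 * p l + (σ l : ℕ)) ∩ E).Nonempty).card =
    (meetingChildren E k p).card := by
  refine card_nbij' (fun σ l => 2 * p l + σ l) (fun m l => ⟨m l % 2, Nat.mod_lt _ two_pos⟩)
    ?_ ?_ ?_ ?_
  · intro σ hσ
    simp only [meetingChildren, coe_filter, mem_univ, true_and, mem_boxLt_iff,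
      Set.mem_ofPred_eq] at hσ ⊢
    refine ⟨fun l => ?_, funext fun l => by omega, hσ⟩
    have := hp l
    have := (σ l).isLt
    rw [pow_succ]; omega
  · intro m hm
    simp only [meetingChildren, coe_filter, mem_univ, true_and, mem_boxLt_iff,
      Set.mem_ofPred_eq] at hm ⊢
    obtain ⟨-, rfl, hmE⟩ := hm
    convert hmE using 3
    funext l
    simp only
    omega
  · intro σ _
    funext l
    ext
    simp only
    omega
  · intro m hm
    simp only [meetingChildren, coe_filter, mem_boxLt_iff,
      Set.mem_ofPred_eq] at hm
    obtain ⟨-, rfl, -⟩ := hm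
    funext l
    simp only
    omega

lemma IsTauOf.apply_succ (hτ : IsTauOf E τ) {k : ℕ} {m : Fin d → ℕ}
    (hm : ∀ l, m l < 2 ^ (k + 1)) :
    τ (k + 1) m = if (dyadicCube (k + 1) m ∩ E).Nonempty then
      τ k (fun l => m l / 2) / (meetingChildren E k fun l => m l / 2).card else 0 := by
  obtain ⟨-, -, hzero, hsplit⟩ := hτ
  split_ifs with hmE
  · have hp : ∀ l, m l / 2 < 2 ^ k := fun l => by have := hm l; rw [pow_succ] at this; omega
    have hpE : (dyadicCube k (fun l => m l / 2) ∩ E).Nonempty :=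
      hmE.mono (Set.inter_subset_inter_left _ (dyadicCube_succ_subset k m))
    have h := hsplit k _ hp hpE fun l => ⟨m l % 2, Nat.mod_lt _ two_pos⟩
    have hm2 : (fun l => 2 * (m l / 2) + m l % 2) = m := funext fun l => by omega
    simp only [hm2, if_pos hmE, card_filter_children_eq E hp] at h
    exact h
  · exact (hzero (k + 1) m hm).2 (Set.not_nonempty_iff_eq_empty.1 hmE)

def IsCausal (φ : GD d → GD d) : Prop :=
  ∀ K g g', AgreeBelow K g g' → AgreeBelow K (φ g) (φ g')

def cubeMap (φ : GD d → GD d) (k : ℕ) (m : Fin d → ℕ) : Fin d → ℕ :=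
  cubeIndex k (φ (cubePoint k m))

variable {φ : GD d → GD d}

lemma cubeMap_lt (φ : GD d → GD d) (k : ℕ) (m : Fin d → ℕ) (l : Fin d) :
    cubeMap φ k m l < 2 ^ k :=
  cubeIndex_lt k _ l

lemma IsCausal.mem_dyadicCube_cubeMap (hφ : IsCausal φ) {k : ℕ} {m : Fin d → ℕ} {g : GD d}
    (hg : g ∈ dyadicCube k m) : φ g ∈ dyadicCube k (cubeMap φ k m) :=
  (hφ k _ _ (agreeBelow_of_mem_dyadicCube (cubePoint_mem_dyadicCube k m) hg)).mem_dyadicCube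
    (mem_dyadicCube_cubeIndex k _)

lemma IsCausal.cubeMap_cubeMap (hφ : IsCausal φ) (hinv : Function.Involutive φ) {k : ℕ}
    {m : Fin d → ℕ} (hm : ∀ l, m l < 2 ^ k) : cubeMap φ k (cubeMap φ k m) = m := by
  have h := hφ.mem_dyadicCube_cubeMap (hφ.mem_dyadicCube_cubeMap (cubePoint_mem_dyadicCube k m))
  rw [hinv] at h
  exact eq_of_mem_dyadicCube h (cubePoint_mem_dyadicCube k m) (cubeMap_lt φ k _) hm

lemma IsCausal.cubeMap_succ_div (hφ : IsCausal φ) (k : ℕ) (m : Fin d → ℕ) :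
    (fun l => cubeMap φ (k + 1) m l / 2) = cubeMap φ k (fun l => m l / 2) := by
  have hpt := cubePoint_mem_dyadicCube (k + 1) m
  refine eq_of_mem_dyadicCube (dyadicCube_succ_subset k _ (hφ.mem_dyadicCube_cubeMap hpt))
    (hφ.mem_dyadicCube_cubeMap (dyadicCube_succ_subset k m hpt)) (fun l => ?_) (cubeMap_lt φ k _)
  have := cubeMap_lt φ (k + 1) m l
  rw [pow_succ] at this
  omega

lemma IsCausal.nonempty_inter_cubeMap_iff (hφ : IsCausal φ) (hinv : Function.Involutive φ)
    (hE : Set.MapsTo φ E E) {k : ℕ} {m : Fin d → ℕ} (hm : ∀ l, m l < 2 ^ k) :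
    (dyadicCube k (cubeMap φ k m) ∩ E).Nonempty ↔ (dyadicCube k m ∩ E).Nonempty := by
  have key : ∀ m', (dyadicCube k m' ∩ E).Nonempty →
      (dyadicCube k (cubeMap φ k m') ∩ E).Nonempty :=
    fun m' ⟨g, hg, hgE⟩ => ⟨φ g, hφ.mem_dyadicCube_cubeMap hg, hE hgE⟩
  refine ⟨fun h => ?_, key m⟩
  simpa only [hφ.cubeMap_cubeMap hinv hm] using key _ h

lemma IsCausal.card_meetingChildren_cubeMap (hφ : IsCausal φ) (hinv : Function.Involutive φ)
    (hE : Set.MapsTo φ E E) {k : ℕ} {p : Fin d → ℕ} (hp : ∀ l, p l < 2 ^ k) :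
    (meetingChildren E k (cubeMap φ k p)).card = (meetingChildren E k p).card := by
  have hmaps : ∀ q : Fin d → ℕ, Set.MapsTo (cubeMap φ (k + 1)) (meetingChildren E k q)
      (meetingChildren E k (cubeMap φ k q)) := by
    intro q m hm
    simp only [meetingChildren, coe_filter, mem_boxLt_iff, Set.mem_ofPred_eq] at hm ⊢
    obtain ⟨hmb, rfl, hmE⟩ := hm
    exact ⟨cubeMap_lt φ _ m, hφ.cubeMap_succ_div k m,
      (hφ.nonempty_inter_cubeMap_iff hinv hE hmb).2 hmE⟩
  have hinvOn : ∀ q : Fin d → ℕ, Set.LeftInvOn (cubeMap φ (k + 1)) (cubeMap φ (k + 1))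
      (meetingChildren E k q) := by
    intro q m hm
    simp only [meetingChildren, coe_filter, mem_boxLt_iff, Set.mem_ofPred_eq] at hm
    exact hφ.cubeMap_cubeMap hinv hm.1
  refine card_nbij' (cubeMap φ (k + 1)) (cubeMap φ (k + 1)) ?_ (hmaps p) (hinvOn _) (hinvOn _)
  simpa only [hφ.cubeMap_cubeMap hinv hp] using hmaps (cubeMap φ k p)

lemma IsTauOf.apply_cubeMap (hτ : IsTauOf E τ) (hφ : IsCausal φ) (hinv : Function.Involutive φ)
    (hE : Set.MapsTo φ E E) (k : ℕ) {m : Fin d → ℕ} (hm : ∀ l, m l < 2 ^ k) :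
    τ k (cubeMap φ k m) = τ k m := by
  induction k generalizing m with
  | zero =>
    congr 1
    funext l
    have := cubeMap_lt φ 0 m l
    have := hm l
    simp only [pow_zero] at *
    omega
  | succ k ih =>
    have hp : ∀ l, m l / 2 < 2 ^ k := fun l => by have := hm l; rw [pow_succ] at this; omega
    rw [hτ.apply_succ (cubeMap_lt φ _ m), hτ.apply_succ hm,
      hφ.nonempty_inter_cubeMap_iff hinv hE hm, hφ.cubeMap_succ_div, ih hp,
      hφ.card_meetingChildren_cubeMap hinv hE hp]

theorem localCoeffAt_eq_zero_of_involution (hτ : IsTauOf E τ) (hφ : IsCausal φ)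
    (hinv : Function.Involutive φ) (hE : Set.MapsTo φ E E) {r : ℕ}
    (hfix : ∀ g, AgreeBelow r (φ g) g) {n : Fin d → ℕ} (hW : ∀ g, walshD n (φ g) = -walshD n g)
    {k : ℕ} (hn : ∀ l, n l < 2 ^ k) (hrk : r ≤ k) (q : Fin d → ℕ) :
    localCoeffAt τ n r q k = 0 := by
  have hval : ∀ m, walshValD k n (cubeMap φ k m) = -walshValD k n m := fun m => by
    have hpt := cubePoint_mem_dyadicCube k m
    rw [← walshD_eq_walshValD hn (hφ.mem_dyadicCube_cubeMap hpt), hW,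
      walshD_eq_walshValD hn hpt]
  have hmem : ∀ {m}, m ∈ (boxLt fun _ => 2 ^ k).filter
      (fun m => dyadicCube k m ⊆ dyadicCube r q) ↔
      (∀ l, m l < 2 ^ k) ∧ dyadicCube k m ⊆ dyadicCube r q := by
    simp [mem_boxLt_iff]
  have hpair : ∀ m, (∀ l, m l < 2 ^ k) →
      (walshValD k n m : ℂ) * τ k m + walshValD k n (cubeMap φ k m) * τ k (cubeMap φ k m) = 0 :=
    fun m hm => by rw [hval, hτ.apply_cubeMap hφ hinv hE k hm]; push_cast; ring
  refine sum_involution (fun m _ => cubeMap φ k m) (fun m hm => hpair m (hmem.1 hm).1)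
    (fun m hm hne hfixed => hne ?_) (fun m hm => hmem.2 ⟨cubeMap_lt φ k m, ?_⟩)
    (fun m hm => hφ.cubeMap_cubeMap hinv (hmem.1 hm).1)
  · have h := hpair m (hmem.1 hm).1
    rwa [hfixed, add_self_eq_zero] at h
  · have hpt := cubePoint_mem_dyadicCube k m
    exact dyadicCube_subset_of_mem hrk (hφ.mem_dyadicCube_cubeMap hpt)
      ((hfix _).symm.mem_dyadicCube ((hmem.1 hm).2 hpt))

end CanonicalQuasimeasure

section ParityConstraints

variable {d : ℕ} (pos : ℕ → ℕ) (T : ℕ → GD d → ZMod 2)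

def parityDefect (j : ℕ) (g : GD d) : ZMod 2 := ∑ l, g l (pos j) + T j g

def IsLocalTarget : Prop := ∀ j g g', AgreeBelow (pos j) g g' → T j g = T j g'

variable {pos T}

lemma parityDefect_congr (hT : IsLocalTarget pos T) {j : ℕ} {g g' : GD d}
    (h : AgreeBelow (pos j + 1) g g') : parityDefect pos T j g = parityDefect pos T j g' := by
  rw [parityDefect, parityDefect, hT j g g' (h.mono (Nat.le_succ _))]
  congr 1
  exact sum_congr rfl fun l _ => h l _ (Nat.lt_succ_self _)

lemma parityDefect_add_single (hT : IsLocalTarget pos T) (j : ℕ) (x : GD d) (lc : Fin d)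
    (c : ZMod 2) :
    parityDefect pos T j (x + Pi.single lc (Pi.single (pos j) c)) =
      parityDefect pos T j x + c := by
  have hlow : AgreeBelow (pos j) (x + Pi.single lc (Pi.single (pos j) c)) x :=
    fun l t ht => by rw [Pi.add_apply, Pi.add_apply, agreeBelow_single_zero le_rfl l t ht]; simp
  have hsum : ∑ l, (Pi.single lc (Pi.single (pos j) c) : GD d) l (pos j) = c := by
    rw [sum_eq_single lc (fun l _ hl => by simp [Pi.single_eq_of_ne hl]) (by simp)]
    simp
  rw [parityDefect, parityDefect, hT j _ _ hlow]
  simp only [Pi.add_apply, sum_add_distrib, hsum]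
  ring

lemma agreeBelow_of_parityDefect_eq (hT : IsLocalTarget pos T) {lc : Fin d} {j₀ K : ℕ}
    {x y : GD d} (hoff : ∀ l, ∀ t < K, (∀ j, j₀ ≤ j → ¬(l = lc ∧ t = pos j)) → x l t = y l t)
    (hdef : ∀ j, j₀ ≤ j → pos j < K → parityDefect pos T j x = parityDefect pos T j y) :
    AgreeBelow K x y := by
  intro l t
  induction t using Nat.strong_induction_on generalizing l with
  | _ t ih =>
  intro ht
  by_cases hcorr : ∃ j, j₀ ≤ j ∧ l = lc ∧ t = pos j
  · obtain ⟨j, hj, rfl, rfl⟩ := hcorr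
    have hlow : AgreeBelow (pos j) x y := fun l' u hu => ih u hu l' (hu.trans ht)
    have hothers : ∀ l' ∈ univ.erase l, x l' (pos j) = y l' (pos j) :=
      fun l' hl' => hoff l' _ ht fun _ _ h => ne_of_mem_erase hl' h.1
    have h := hdef j hj ht
    rwa [parityDefect, parityDefect, hT j x y hlow, ← add_sum_erase _ _ (mem_univ l),
      ← add_sum_erase _ _ (mem_univ l), sum_congr rfl hothers, add_right_cancel_iff,
      add_right_cancel_iff] at h
  · exact hoff l t ht fun j hj h => hcorr ⟨j, hj, h⟩

variable (pos T) (e : GD d) (lc : Fin d) (j₀ : ℕ)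

/-- Step `i` flips bit `pos (j₀ + i)` of coordinate `lc` so that the defect at level `j₀ + i`
becomes that of `g`; later steps only touch higher bits, so bit `t` is final after step `t + 1`. -/
def correctionSeq (g : GD d) : ℕ → GD d
  | 0 => g + e
  | i + 1 => correctionSeq g i + Pi.single lc (Pi.single (pos (j₀ + i))
      (parityDefect pos T (j₀ + i) (correctionSeq g i) + parityDefect pos T (j₀ + i) g))

def parityCorrection (g : GD d) : GD d := fun l t => correctionSeq pos T e lc j₀ g (t + 1) l t

variable {pos T e lc j₀}

lemma correctionSeq_succ_apply_of_ne {g : GD d} {i : ℕ} {l : Fin d} {t : ℕ}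
    (h : ¬(l = lc ∧ t = pos (j₀ + i))) :
    correctionSeq pos T e lc j₀ g (i + 1) l t = correctionSeq pos T e lc j₀ g i l t := by
  rw [correctionSeq, Pi.add_apply, Pi.add_apply, Pi.single_apply]
  split_ifs with hl
  · subst hl
    rw [Pi.single_apply, if_neg fun ht => h ⟨rfl, ht⟩, add_zero]
  · simp

lemma correctionSeq_apply_of_lt (hpos : StrictMono pos) {g : GD d} {i i' : ℕ} (hi : i' ≤ i)
    {l : Fin d} {t : ℕ} (ht : t < pos (j₀ + i')) :
    correctionSeq pos T e lc j₀ g i l t = correctionSeq pos T e lc j₀ g i' l t := by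
  induction i, hi using Nat.le_induction with
  | base => rfl
  | succ i hi ih =>
    rw [correctionSeq_succ_apply_of_ne fun h => ?_, ih]
    have := hpos.monotone (Nat.add_le_add_left hi j₀)
    omega

lemma parityCorrection_apply_of_lt (hpos : StrictMono pos) {g : GD d} {i : ℕ} {l : Fin d}
    {t : ℕ} (ht : t < pos (j₀ + i)) :
    parityCorrection pos T e lc j₀ g l t = correctionSeq pos T e lc j₀ g i l t := by
  rcases le_total i (t + 1) with hi | hi
  · exact correctionSeq_apply_of_lt hpos hi ht
  · refine (correctionSeq_apply_of_lt hpos hi ?_).symm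
    have : j₀ + (t + 1) ≤ pos (j₀ + (t + 1)) := hpos.le_apply
    omega

lemma parityCorrection_apply_of_forall_ne {g : GD d} {l : Fin d} {t : ℕ}
    (h : ∀ j, j₀ ≤ j → ¬(l = lc ∧ t = pos j)) :
    parityCorrection pos T e lc j₀ g l t = g l t + e l t := by
  suffices ∀ i, correctionSeq pos T e lc j₀ g i l t = g l t + e l t from this (t + 1)
  intro i
  induction i with
  | zero => rfl
  | succ i ih => rw [correctionSeq_succ_apply_of_ne (h _ (Nat.le_add_right j₀ i)), ih]

lemma parityDefect_parityCorrection (hpos : StrictMono pos) (hT : IsLocalTarget pos T)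
    (g : GD d) {j : ℕ} (hj : j₀ ≤ j) :
    parityDefect pos T j (parityCorrection pos T e lc j₀ g) = parityDefect pos T j g := by
  obtain ⟨i, rfl⟩ := Nat.exists_eq_add_of_le hj
  have hagree : AgreeBelow (pos (j₀ + i) + 1) (parityCorrection pos T e lc j₀ g)
      (correctionSeq pos T e lc j₀ g (i + 1)) := fun l t ht =>
    parityCorrection_apply_of_lt hpos (lt_of_lt_of_le ht (hpos (Nat.lt_succ_self _)))
  rw [parityDefect_congr hT hagree, correctionSeq, parityDefect_add_single hT,
    CharTwo.add_cancel_left]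

theorem isCausal_parityCorrection (hpos : StrictMono pos) (hT : IsLocalTarget pos T) :
    IsCausal (parityCorrection pos T e lc j₀) := by
  intro K g g' h
  refine agreeBelow_of_parityDefect_eq hT (lc := lc) (j₀ := j₀) (fun l t ht hne => ?_)
    (fun j hj hjK => ?_)
  · rw [parityCorrection_apply_of_forall_ne hne, parityCorrection_apply_of_forall_ne hne,
      h l t ht]
  · rw [parityDefect_parityCorrection hpos hT _ hj, parityDefect_parityCorrection hpos hT _ hj]
    exact parityDefect_congr hT (h.mono hjK)

theorem parityCorrection_involutive (hpos : StrictMono pos) (hT : IsLocalTarget pos T) :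
    Function.Involutive (parityCorrection pos T e lc j₀) := by
  intro g
  funext l t
  refine agreeBelow_of_parityDefect_eq hT (K := t + 1) (lc := lc) (j₀ := j₀)
    (fun l t _ hne => ?_) (fun j hj _ => ?_) l t (Nat.lt_succ_self t)
  · rw [parityCorrection_apply_of_forall_ne hne, parityCorrection_apply_of_forall_ne hne,
      add_assoc, CharTwo.add_self_eq_zero, add_zero]
  · rw [parityDefect_parityCorrection hpos hT _ hj, parityDefect_parityCorrection hpos hT _ hj]

lemma parityCorrection_agreeBelow (hpos : StrictMono pos) {R : ℕ} (he : AgreeBelow R e 0)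
    (hR : R ≤ pos j₀) (g : GD d) : AgreeBelow R (parityCorrection pos T e lc j₀ g) g := by
  intro l t ht
  rw [parityCorrection_apply_of_forall_ne fun j hj h => ?_, he l t ht, Pi.zero_apply,
    Pi.zero_apply, add_zero]
  have := hpos.monotone hj
  omega

theorem mapsTo_parityCorrection (hpos : StrictMono pos) (hT : IsLocalTarget pos T) {R : ℕ}
    (he : AgreeBelow R e 0) (hR : R ≤ pos j₀) (hposR : ∀ j < j₀, pos j < R) :
    Set.MapsTo (parityCorrection pos T e lc j₀) {g | ∀ j, parityDefect pos T j g = 0}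
      {g | ∀ j, parityDefect pos T j g = 0} := by
  intro g hg j
  rcases le_or_gt j₀ j with hj | hj
  · rw [parityDefect_parityCorrection hpos hT g hj]
    exact hg j
  · rw [parityDefect_congr hT ((parityCorrection_agreeBelow hpos he hR g).mono (hposR j hj))]
    exact hg j

lemma walshD_parityCorrection {n : Fin d → ℕ}
    (hn : ∀ j, j₀ ≤ j → (n lc).testBit (pos j) = false) (g : GD d) :
    walshD n (parityCorrection pos T e lc j₀ g) = walshD n g * walshD n e := by
  rw [← walshD_add]
  refine walshD_congr fun l t ht => parityCorrection_apply_of_forall_ne ?_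
  rintro j hj ⟨rfl, rfl⟩
  rw [hn j hj] at ht
  exact Bool.false_ne_true ht

end ParityConstraints

section LayerConstraints

variable {d : ℕ}

lemma mSeq_succ_of_pos {s : ℕ} (hs : 1 ≤ s) : mSeq (s + 1) = 2 * (2 * mSeq s + 1) := by
  rw [mSeq, if_neg (by omega)]

lemma mSeq_monotone : Monotone mSeq := by
  refine monotone_nat_of_le_succ fun s => ?_
  rcases s with _ | s
  · simp [mSeq]
  · rw [mSeq_succ_of_pos (s := s + 1) (by omega)]
    omega

lemma two_mul_mSeq_lt {s' s : ℕ} (hs' : 1 ≤ s') (h : s' < s) : 2 * mSeq s' < mSeq s :=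
  calc 2 * mSeq s' < mSeq (s' + 1) := by rw [mSeq_succ_of_pos hs']; omega
    _ ≤ mSeq s := mSeq_monotone h

lemma strictMono_two_mul_mSeq_succ : StrictMono fun j => 2 * mSeq (j + 1) :=
  strictMono_nat_of_lt_succ fun j => by
    have := two_mul_mSeq_lt (Nat.le_add_left 1 j) (by omega : j + 1 < j + 1 + 1)
    omega

/-- `W^{(m_s)}_{P_s(𝐦)𝐦'}` for the two blocks `𝐦, 𝐦'` of `m_s` digits of `g`, encoded in `ℤ/2ℤ`
through `signChar`. -/
def fTarget (P : ℕ → (Fin d → ℕ) → Fin d → ℕ) (s : ℕ) (g : GD d) : ZMod 2 :=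
  if walshValD (mSeq s) (P s (cubeIndex (mSeq s) g))
      (cubeIndex (mSeq s) fun l t => g l (mSeq s + t)) = 1 then 0 else 1

lemma signChar_fTarget (P : ℕ → (Fin d → ℕ) → Fin d → ℕ) (s : ℕ) (g : GD d) :
    signChar (fTarget P s g) = walshValD (mSeq s) (P s (cubeIndex (mSeq s) g))
      (cubeIndex (mSeq s) fun l t => g l (mSeq s + t)) := by
  rw [fTarget]
  rcases walshD_eq_one_or_neg_one (P s (cubeIndex (mSeq s) g))
    (cubePoint (mSeq s) (cubeIndex (mSeq s) fun l t => g l (mSeq s + t))) with h | h <;>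
    norm_num [walshValD, h, signChar_apply]

lemma fTarget_congr (P : ℕ → (Fin d → ℕ) → Fin d → ℕ) (s : ℕ) {g g' : GD d}
    (h : AgreeBelow (2 * mSeq s) g g') : fTarget P s g = fTarget P s g' := by
  rw [fTarget, fTarget, cubeIndex_congr (h.mono (by omega)),
    cubeIndex_congr fun l u hu => h l (mSeq s + u) (by omega)]

lemma mem_dyadicCube_two_pow_mul_add_iff {μ : ℕ} {a b : Fin d → ℕ} (ha : ∀ l, a l < 2 ^ μ)
    (hb : ∀ l, b l < 2 ^ μ) (g : GD d) :
    g ∈ dyadicCube (2 * μ) (fun l => 2 ^ μ * a l + b l) ↔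
      cubeIndex μ g = a ∧ (cubeIndex μ fun l t => g l (μ + t)) = b := by
  rw [cubeIndex_eq_iff ha, cubeIndex_eq_iff hb, two_mul]
  simp only [dyadicCube, Set.mem_ofPred_eq, mem_dyadicInterval_two_pow_mul_add (hb _),
    forall_and]

lemma mem_Fspi_iff (P : ℕ → (Fin d → ℕ) → Fin d → ℕ) (s : ℕ) (g : GD d) :
    g ∈ Fspi P s ↔ ∑ l, g l (2 * mSeq s) = fTarget P s g := by
  simp only [Fspi, Set.mem_iUnion, Set.mem_ofPred_eq, exists_prop]
  rw [← signChar_injective.eq_iff, signChar_fTarget, ← walshD_const_two_pow]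
  constructor
  · rintro ⟨a, ha, b, hb, hg, hW⟩
    obtain ⟨rfl, rfl⟩ := (mem_dyadicCube_two_pow_mul_add_iff ha hb g).1 hg
    exact hW
  · intro hW
    exact ⟨_, cubeIndex_lt _ g, _, cubeIndex_lt _ _,
      (mem_dyadicCube_two_pow_mul_add_iff (cubeIndex_lt _ g) (cubeIndex_lt _ _) g).2 ⟨rfl, rfl⟩,
      hW⟩

lemma isLocalTarget_fTarget (P : ℕ → (Fin d → ℕ) → Fin d → ℕ) :
    IsLocalTarget (fun j => 2 * mSeq (j + 1)) (fun j => fTarget (d := d) P (j + 1)) :=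
  fun j _ _ h => fTarget_congr P (j + 1) h

lemma Fpi_eq_setOf_parityDefect (P : ℕ → (Fin d → ℕ) → Fin d → ℕ) :
    Fpi P = {g | ∀ j, parityDefect (fun j => 2 * mSeq (j + 1)) (fun j => fTarget P (j + 1)) j g
      = 0} := by
  ext g
  simp only [Fpi, Set.mem_iInter, Set.mem_Ici, Set.mem_ofPred_eq, parityDefect,
    CharTwo.add_eq_zero, mem_Fspi_iff]
  refine ⟨fun h j => h (j + 1) (Nat.le_add_left 1 j), fun h s hs => ?_⟩
  obtain ⟨j, rfl⟩ := Nat.exists_eq_add_of_le' hs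
  exact h j

end LayerConstraints

theorem statement12_general (d : ℕ) (π : PermSeq d)
    (τ : ℕ → (Fin d → ℕ) → ℂ) (hτ : IsTauOf (Fpi π.f) τ) (s : ℕ)
    (n : Fin d → ℕ) (h1 : ∀ l, n l < 2 ^ (2 * mSeq s + 1))
    (h2 : ¬(∀ l, 2 ^ (2 * mSeq s) ≤ n l ∧ n l < 2 ^ (2 * mSeq s + 1)))
    (h3 : ¬(∀ l, n l < 2 ^ mSeq s)) :
    ∀ lv : Fin d → ℕ, (∀ l, lv l < 2 ^ mSeq s) →
      ∀ k : ℕ, (∀ l, n l < 2 ^ k) → mSeq s ≤ k →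
        localCoeffAt τ n (mSeq s) lv k = 0 := by
  intro lv _ k hk hsk
  obtain ⟨l₀, t₀, ht₀, hbit⟩ : ∃ l₀ t₀, mSeq s ≤ t₀ ∧ (n l₀).testBit t₀ := by
    push Not at h3
    obtain ⟨l₀, hl₀⟩ := h3
    exact ⟨l₀, Nat.exists_testBit_of_two_pow_le hl₀⟩
  obtain ⟨lc, hlc⟩ : ∃ lc, n lc < 2 ^ (2 * mSeq s) := by
    push Not at h2
    obtain ⟨l, hl⟩ := h2
    exact ⟨l, not_le.1 fun h => (hl h).not_gt (h1 l)⟩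
  -- Layer `F_{j+1}` is parity constraint `j`, so the corrections start at `j₀ = s - 1`.
  have hR : mSeq s ≤ 2 * mSeq (s - 1 + 1) :=
    (mSeq_monotone (by omega)).trans (Nat.le_mul_of_pos_left _ two_pos)
  have hposR : ∀ j < s - 1, 2 * mSeq (j + 1) < mSeq s :=
    fun j hj => two_mul_mSeq_lt (Nat.le_add_left 1 j) (by omega)
  have hlc_bits : ∀ j, s - 1 ≤ j → (n lc).testBit (2 * mSeq (j + 1)) = false :=
    fun j hj => Nat.testBit_eq_false_of_lt_two_pow hlc
      (Nat.mul_le_mul_left 2 (mSeq_monotone (by omega)))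
  have he := agreeBelow_single_zero (l₀ := l₀) (c := 1) ht₀
  have hpos := strictMono_two_mul_mSeq_succ
  have hT := isLocalTarget_fTarget π.f
  rw [Fpi_eq_setOf_parityDefect] at hτ
  refine localCoeffAt_eq_zero_of_involution hτ (isCausal_parityCorrection (lc := lc) hpos hT)
    (parityCorrection_involutive hpos hT) (mapsTo_parityCorrection hpos hT he hR hposR)
    (parityCorrection_agreeBelow hpos he hR) (fun g => ?_) hk hsk lv
  rw [walshD_parityCorrection hlc_bits, walshD_single, if_pos hbit, mul_neg_one]

/-- if `𝐧 < 2^{2m_s+1}𝟏`, `𝐧 ∉ B_{2m_s}` and `𝐧 ∉ {0,…,2^{m_s}−1}^d`,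
then all local coefficients `(τ^π)̂_𝐧(Δ^{(m_s)}_𝐥)` vanish. -/
theorem statement12 (d : ℕ) (hd : 2 ≤ d) (π : PermSeq d)
    (τ : ℕ → (Fin d → ℕ) → ℂ) (hτ : IsTauOf (Fpi π.f) τ) (s : ℕ) (hs : 1 ≤ s)
    (n : Fin d → ℕ) (h1 : ∀ l, n l < 2 ^ (2 * mSeq s + 1))
    (h2 : ¬(∀ l, 2 ^ (2 * mSeq s) ≤ n l ∧ n l < 2 ^ (2 * mSeq s + 1)))
    (h3 : ¬(∀ l, n l < 2 ^ mSeq s)) :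
    ∀ lv : Fin d → ℕ, (∀ l, lv l < 2 ^ mSeq s) →
      ∀ k : ℕ, (∀ l, n l < 2 ^ k) → mSeq s ≤ k →
        localCoeffAt τ n (mSeq s) lv k = 0 :=
  statement12_general d π τ hτ s n h1 h2 h3
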